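/- arXiv:1009.5916 — 3 statements merged into one kernel-verified Lean document; each statement's English description precedes it below -/
import Mathlib

section
/- Let (S_n)_{n≥1} be a sequence of ℝ^d-valued random variables with E[‖S_n‖] < ∞ for all n ≥ 1. Suppose there exist R > 0 and functions λ, L ∈ C_b^1(B(0,R),ℂ) with λ(0) = 1, L(0) = 1, and functions R_n : B(0,R) → ℂ, such that E[e^{i⟨t,S_n⟩}] = λ(t)^n L(t) + R_n(t) for all t ∈ B(0,R) and n ≥ 1, the series Σ_{n≥1} R_n converges uniformly on B(0,R) to a function in C_b^1(B(0,R),ℂ), each R_n is differentiable at 0, and sup_{n≥1} ‖∇R_n(0)‖ < ∞. Then (1/i)∇λ(0) = lim_n (1/n) E[S_n]. -/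
/-! Differentiate `E[e^{i⟨t,S_n⟩}] = λ(t)^n L(t) + R_n(t)` at `t = 0` in the direction `e_j`.
Differentiating under the integral, the left side gives `i E[S_n j]`; since `λ(0) = L(0) = 1`,
the right side gives `n ∂_jλ(0) + ∂_jL(0) + ∂_jR_n(0)`. After division by `n` the last two
terms are `O(1/n)`, because `∇R_n(0)` is bounded uniformly in `n`. -/

open MeasureTheory Filter Metric
open scoped Topology ENNReal NNReal BigOperators

noncomputable section

abbrev Ed (d : ℕ) : Type := EuclideanSpace ℝ (Fin d)

/-- Membership in `C_b^m(O, ℂ)`. -/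
def IsCbm {d : ℕ} (m : ℝ) (O : Set (Ed d)) (U : Ed d → ℂ) : Prop :=
  ContDiffOn ℝ (⌊m⌋₊ : ℕ) U O ∧
  (∀ j : ℕ, j ≤ ⌊m⌋₊ → ∃ C : ℝ, ∀ t ∈ O, ‖iteratedFDerivWithin ℝ j U O t‖ ≤ C) ∧
  ∃ C : ℝ, 0 ≤ C ∧ ∀ t ∈ O, ∀ t' ∈ O,
    ‖iteratedFDerivWithin ℝ (⌊m⌋₊) U O t - iteratedFDerivWithin ℝ (⌊m⌋₊) U O t'‖
      ≤ C * ‖t - t'‖ ^ (m - (⌊m⌋₊ : ℝ))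

/-- The characteristic function `t ↦ E[e^{i⟨t,S_n⟩}]`. -/
def chS {Ω : Type*} [MeasurableSpace Ω] {d : ℕ} (ℙ : Measure Ω) (S : ℕ → Ω → Ed d)
    (n : ℕ) (t : Ed d) : ℂ :=
  ∫ ω, Complex.exp (Complex.I * ((inner ℝ t (S n ω) : ℝ) : ℂ)) ∂ℙ

open Complex
open scoped RealInnerProductSpace

theorem IsCbm.differentiableAt {d : ℕ} {m : ℝ} {O : Set (Ed d)} {U : Ed d → ℂ}
    (hU : IsCbm m O U) (hm : 1 ≤ m) (hO : IsOpen O) {t : Ed d} (ht : t ∈ O) :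
    DifferentiableAt ℝ U t :=
  (hU.1.contDiffAt (hO.mem_nhds ht)).differentiableAt <| by
    exact_mod_cast Nat.one_le_iff_ne_zero.mp ((Nat.one_le_floor_iff m).mpr hm)

theorem fderiv_charFun_zero_apply {E : Type*} [NormedAddCommGroup E] [InnerProductSpace ℝ E]
    [MeasurableSpace E] [BorelSpace E] [SecondCountableTopology E]
    {μ : Measure E} [IsFiniteMeasure μ] (hμ : Integrable id μ) (v : E) :
    fderiv ℝ (charFun μ) 0 v = I * ∫ x, (⟪x, v⟫ : ℂ) ∂μ := by
  simpa using iteratedFDeriv_charFun (n := 1) (t := 0)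
    (by simpa using memLp_one_iff_integrable.mpr hμ) (fun _ => v)

theorem chS_eq_charFun_map {Ω : Type*} [MeasurableSpace Ω] {d : ℕ} (μ : Measure Ω)
    (S : ℕ → Ω → Ed d) (n : ℕ) (hS : AEMeasurable (S n) μ) :
    chS μ S n = charFun (μ.map (S n)) := by
  ext t
  rw [charFun_apply, integral_map hS (by fun_prop)]
  simp only [chS, real_inner_comm t, mul_comm I]

theorem HasFDerivAt.pow_mul_add {𝕜 E 𝔸 : Type*} [NontriviallyNormedField 𝕜]
    [NormedAddCommGroup E] [NormedSpace 𝕜 E] [NormedCommRing 𝔸] [NormedAlgebra 𝕜 𝔸]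
    {f g r : E → 𝔸} {f' g' r' : E →L[𝕜] 𝔸} {x : E}
    (hf : HasFDerivAt f f' x) (hg : HasFDerivAt g g' x) (hr : HasFDerivAt r r' x)
    (hf1 : f x = 1) (hg1 : g x = 1) (n : ℕ) :
    HasFDerivAt (fun t => f t ^ n * g t + r t) (n • f' + g' + r') x := by
  refine (((hf.pow n).mul hg).add hr).congr_fderiv ?_
  simp only [hf1, hg1, one_pow, smul_assoc, one_smul]
  abel

theorem tendsto_inv_mul_of_eq_nat_mul_add_bounded {𝕜 : Type*} [RCLike 𝕜] {u r : ℕ → 𝕜}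
    {a b : 𝕜} {M : ℝ}
    (hu : ∀ᶠ n in atTop, u n = n * a + b + r n) (hr : ∀ᶠ n in atTop, ‖r n‖ ≤ M) :
    Tendsto (fun n : ℕ => (n : 𝕜)⁻¹ * u n) atTop (𝓝 a) := by
  have hrem : Tendsto (fun n : ℕ => (n : 𝕜)⁻¹ * (b + r n)) atTop (𝓝 0) :=
    tendsto_inv_atTop_nhds_zero_nat.zero_mul_isBoundedUnder_le
      (isBoundedUnder_of_eventually_le (a := ‖b‖ + M) (by
        filter_upwards [hr] with n hn using (norm_add_le _ _).trans (by linarith)))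
  have hlim := (tendsto_const_nhds (x := a)).add hrem
  rw [add_zero] at hlim
  refine hlim.congr' ?_
  filter_upwards [hu, eventually_ne_atTop 0] with n hn hn0
  rw [hn]
  field_simp
  ring

theorem fderiv_chS_zero_apply {Ω : Type*} [MeasurableSpace Ω] {d : ℕ} (μ : Measure Ω)
    [IsFiniteMeasure μ] (S : ℕ → Ω → Ed d) (n : ℕ) (hS : Measurable (S n))
    (hint : Integrable (S n) μ) (v : Ed d) :
    fderiv ℝ (chS μ S n) 0 v = I * ∫ ω, (⟪S n ω, v⟫ : ℂ) ∂μ := by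
  rw [chS_eq_charFun_map μ S n hS.aemeasurable,
    fderiv_charFun_zero_apply ((integrable_map_measure (by fun_prop) hS.aemeasurable).mpr hint),
    integral_map hS.aemeasurable (by fun_prop)]

theorem asymptotic_first_moment_general
    {Ω : Type*} [MeasurableSpace Ω] {d : ℕ}
    (ℙ : Measure Ω) [IsProbabilityMeasure ℙ]
    (S : ℕ → Ω → Ed d) (hS : ∀ n, Measurable (S n))
    (hSint : ∀ n : ℕ, 1 ≤ n → Integrable (fun ω => ‖S n ω‖) ℙ)
    (R : ℝ) (hR : 0 < R) (lam L : Ed d → ℂ) (Rn : ℕ → Ed d → ℂ)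
    (hlam0 : lam 0 = 1) (hL0 : L 0 = 1)
    (hlamCb : IsCbm 1 (ball 0 R) lam) (hLCb : IsCbm 1 (ball 0 R) L)
    (heq : ∀ n : ℕ, 1 ≤ n → ∀ t ∈ ball (0 : Ed d) R,
      chS ℙ S n t = lam t ^ n * L t + Rn n t)
    (hdiff : ∀ n : ℕ, 1 ≤ n → DifferentiableAt ℝ (Rn n) 0)
    (hbound : ∃ M : ℝ, ∀ n : ℕ, 1 ≤ n → ‖fderiv ℝ (Rn n) 0‖ ≤ M) :
    ∀ j : Fin d,
      Tendsto (fun n : ℕ => ((n : ℂ))⁻¹ * ∫ ω, ((S n ω j : ℝ) : ℂ) ∂ℙ) atTop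
        (𝓝 (fderiv ℝ lam 0 (EuclideanSpace.single j 1) / Complex.I)) := by
  intro j
  obtain ⟨M, hM⟩ := hbound
  set e : Ed d := EuclideanSpace.single j 1
  have hlam := hlamCb.differentiableAt le_rfl isOpen_ball (mem_ball_self hR)
  have hL := hLCb.differentiableAt le_rfl isOpen_ball (mem_ball_self hR)
  refine tendsto_inv_mul_of_eq_nat_mul_add_bounded (b := fderiv ℝ L 0 e / I)
    (r := fun n => fderiv ℝ (Rn n) 0 e / I) (M := M) ?_ ?_
  · filter_upwards [eventually_ge_atTop 1] with n hn
    have hderiv : fderiv ℝ (chS ℙ S n) 0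
        = n • fderiv ℝ lam 0 + fderiv ℝ L 0 + fderiv ℝ (Rn n) 0 :=
      (eventuallyEq_of_mem (isOpen_ball.mem_nhds (mem_ball_self hR)) (heq n hn)).fderiv_eq.trans
        (hlam.hasFDerivAt.pow_mul_add hL.hasFDerivAt (hdiff n hn).hasFDerivAt hlam0 hL0 n).fderiv
    have hint : Integrable (S n) ℙ :=
      (integrable_norm_iff (hS n).aestronglyMeasurable).mp (hSint n hn)
    have he := congrArg (· e) hderiv
    simp only [fderiv_chS_zero_apply ℙ S n (hS n) hint, EuclideanSpace.inner_single_right,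
      Real.ringHom_apply, one_mul, add_apply, smul_apply, nsmul_eq_mul, e] at he
    field_simp
    linear_combination he
  · filter_upwards [eventually_ge_atTop 1] with n hn
    calc ‖fderiv ℝ (Rn n) 0 e / I‖ = ‖fderiv ℝ (Rn n) 0 e‖ := by simp
      _ ≤ ‖fderiv ℝ (Rn n) 0‖ := by
        simpa [e] using (fderiv ℝ (Rn n) 0).le_opNorm e
      _ ≤ M := hM n hn

/-- **Proposition (asymptotic first moment): `(1/i) ∇λ(0) = lim_n (1/n) E[S_n]`.** -/
theorem asymptotic_first_moment
    {Ω : Type*} [MeasurableSpace Ω] {d : ℕ}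
    (ℙ : Measure Ω) [IsProbabilityMeasure ℙ]
    (S : ℕ → Ω → Ed d) (hS : ∀ n, Measurable (S n))
    (hSint : ∀ n : ℕ, 1 ≤ n → Integrable (fun ω => ‖S n ω‖) ℙ)
    (R : ℝ) (hR : 0 < R) (lam L : Ed d → ℂ) (Rn : ℕ → Ed d → ℂ)
    (hlam0 : lam 0 = 1) (hL0 : L 0 = 1)
    (hlamCb : IsCbm 1 (ball 0 R) lam) (hLCb : IsCbm 1 (ball 0 R) L)
    (heq : ∀ n : ℕ, 1 ≤ n → ∀ t ∈ ball (0 : Ed d) R,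
      chS ℙ S n t = lam t ^ n * L t + Rn n t)
    (hunif : TendstoUniformlyOn (fun N t => ∑ n ∈ Finset.range N, Rn (n + 1) t)
      (fun t => ∑' n : ℕ, Rn (n + 1) t) atTop (ball (0 : Ed d) R))
    (hCb : IsCbm 1 (ball 0 R) (fun t => ∑' n : ℕ, Rn (n + 1) t))
    (hdiff : ∀ n : ℕ, 1 ≤ n → DifferentiableAt ℝ (Rn n) 0)
    (hbound : ∃ M : ℝ, ∀ n : ℕ, 1 ≤ n → ‖fderiv ℝ (Rn n) 0‖ ≤ M) :
    ∀ j : Fin d,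
      Tendsto (fun n : ℕ => ((n : ℂ))⁻¹ * ∫ ω, ((S n ω j : ℝ) : ℂ) ∂ℙ) atTop
        (𝓝 (fderiv ℝ lam 0 (EuclideanSpace.single j 1) / Complex.I)) :=
  asymptotic_first_moment_general ℙ S hS hSint R hR lam L Rn hlam0 hL0 hlamCb hLCb heq hdiff hbound
end
end

section
/- Let (S_n)_{n≥1} be a sequence of ℝ^d-valued random variables with E[‖S_n‖²] < ∞ for all n ≥ 1. Suppose there exist R > 0 and functions λ, L ∈ C_b^2(B(0,R),ℂ) with λ(0) = 1, L(0) = 1, and functions R_n : B(0,R) → ℂ, such that E[e^{i⟨t,S_n⟩}] = λ(t)^n L(t) + R_n(t) for all t ∈ B(0,R) and n ≥ 1, the series Σ_{n≥1} R_n converges uniformly on B(0,R) to a function in C_b^2(B(0,R),ℂ), each R_n is twice differentiable at 0 with sup_{n≥1} of the norms of the second-order derivatives of R_n at 0 finite, and in addition ∇λ(0) = 0. Then −Hess λ(0) = lim_n (1/n) E[S_n S_n^*], where S_n S_n^* denotes the d×d matrix with entries (S_n)_j (S_n)_k. -/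
open MeasureTheory Filter Metric
open scoped Topology ENNReal NNReal BigOperators

noncomputable section

/-!
The second moments of `S_n` are read off the characteristic function `φ_n`:
`E[⟨S_n, u⟩⟨S_n, v⟩] = -D²φ_n(0)(u, v)`. Differentiating `φ_n = λⁿ L + R_n` twice at `0`, the
normalisations `λ(0) = L(0) = 1` and `∇λ(0) = 0` kill every cross term, leaving
`D²φ_n(0) = D²L(0) + n D²λ(0) + D²R_n(0)`. Dividing by `n`, the bounded terms `D²L(0)` and
`D²R_n(0)` disappear in the limit.
-/

open scoped RealInnerProductSpace

section SecondDerivative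

variable {𝕜 E 𝕜' : Type*} [NontriviallyNormedField 𝕜] [NormedAddCommGroup E] [NormedSpace 𝕜 E]
  [NormedField 𝕜'] [NormedAlgebra 𝕜 𝕜'] {f g : E → 𝕜'} {x : E}

theorem fderiv_fderiv_mul_apply (hf : ContDiffAt 𝕜 2 f x) (hg : ContDiffAt 𝕜 2 g x) (u v : E) :
    fderiv 𝕜 (fderiv 𝕜 (fun y => f y * g y)) x u v =
      fderiv 𝕜 (fderiv 𝕜 f) x u v * g x + fderiv 𝕜 f x v * fderiv 𝕜 g x u
        + fderiv 𝕜 f x u * fderiv 𝕜 g x v + f x * fderiv 𝕜 (fderiv 𝕜 g) x u v := by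
  have hf' : DifferentiableAt 𝕜 (fderiv 𝕜 f) x :=
    (hf.fderiv_right (m := 1) le_rfl).differentiableAt one_ne_zero
  have hg' : DifferentiableAt 𝕜 (fderiv 𝕜 g) x :=
    (hg.fderiv_right (m := 1) le_rfl).differentiableAt one_ne_zero
  have hfg : fderiv 𝕜 (fun y => f y * g y) =ᶠ[𝓝 x]
      fun y => f y • fderiv 𝕜 g y + g y • fderiv 𝕜 f y := by
    filter_upwards [hf.eventually (by simp), hg.eventually (by simp)] with y hfy hgy
    exact fderiv_fun_mul (hfy.differentiableAt two_ne_zero) (hgy.differentiableAt two_ne_zero)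
  have hD := ((hf.differentiableAt two_ne_zero).hasFDerivAt.fun_smul hg'.hasFDerivAt).fun_add
    ((hg.differentiableAt two_ne_zero).hasFDerivAt.fun_smul hf'.hasFDerivAt)
  rw [hfg.fderiv_eq, hD.fderiv]
  simp only [add_apply, smul_apply, ContinuousLinearMap.smulRight_apply, smul_eq_mul]
  ring

theorem fderiv_fderiv_pow_mul_apply_of_eq_one (hf : ContDiffAt 𝕜 2 f x) (hg : ContDiffAt 𝕜 2 g x)
    (hfx : f x = 1) (hgx : g x = 1) (hf' : fderiv 𝕜 f x = 0) (n : ℕ) (u v : E) :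
    fderiv 𝕜 (fderiv 𝕜 (fun y => f y ^ n * g y)) x u v =
      n * fderiv 𝕜 (fderiv 𝕜 f) x u v + fderiv 𝕜 (fderiv 𝕜 g) x u v := by
  induction n with
  | zero => simp
  | succ n ih =>
    have hfg : (fun y => f y ^ (n + 1) * g y) = fun y => f y * (f y ^ n * g y) := by
      simp only [pow_succ', mul_assoc]
    rw [hfg, fderiv_fderiv_mul_apply hf ((hf.pow n).mul hg), ih, hf', hfx, hgx]
    simp only [zero_apply, zero_mul, add_zero, one_pow, one_mul, Nat.cast_succ]
    ring

theorem fderiv_fderiv_apply_of_eventuallyEq_pow_mul_add {φ r : E → 𝕜'} {n : ℕ}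
    (hφ : ContDiffAt 𝕜 2 φ x) (hf : ContDiffAt 𝕜 2 f x) (hg : ContDiffAt 𝕜 2 g x)
    (hfx : f x = 1) (hgx : g x = 1) (hf' : fderiv 𝕜 f x = 0)
    (h : ∀ᶠ y in 𝓝 x, φ y = f y ^ n * g y + r y) (u v : E) :
    fderiv 𝕜 (fderiv 𝕜 φ) x u v =
      fderiv 𝕜 (fderiv 𝕜 g) x u v + n * fderiv 𝕜 (fderiv 𝕜 f) x u v
        + fderiv 𝕜 (fderiv 𝕜 r) x u v := by
  have hr : r =ᶠ[𝓝 x] fun y => φ y - f y ^ n * g y := by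
    filter_upwards [h] with y hy
    rw [hy]; ring
  have h2 := congrArg (· ![u, v]) ((hr.iteratedFDeriv 𝕜 2).eq_of_nhds)
  simp only [fun_iteratedFDeriv_sub_apply hφ ((hf.pow n).mul hg), sub_apply,
    iteratedFDeriv_two_apply, Matrix.cons_val_zero, Matrix.cons_val_one] at h2
  rw [h2, fderiv_fderiv_pow_mul_apply_of_eq_one hf hg hfx hgx hf']
  ring

end SecondDerivative

section CharacteristicFunction

variable {E : Type*} [NormedAddCommGroup E] [InnerProductSpace ℝ E] [MeasurableSpace E]
  [BorelSpace E] [SecondCountableTopology E] {μ : Measure E} [IsFiniteMeasure μ]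

theorem fderiv_fderiv_charFun_zero_apply (hμ : MemLp id 2 μ) (u v : E) :
    fderiv ℝ (fderiv ℝ (charFun μ)) 0 u v = -∫ y, ((⟪y, u⟫ * ⟪y, v⟫ : ℝ) : ℂ) ∂μ := by
  have h := iteratedFDeriv_charFun (t := 0) hμ ![u, v]
  simp only [iteratedFDeriv_two_apply, Matrix.cons_val_zero, Matrix.cons_val_one] at h
  simp [h, Fin.prod_univ_two]

end CharacteristicFunction

section RandomVector

variable {Ω : Type*} [MeasurableSpace Ω] {ℙ : Measure Ω} {d : ℕ}

theorem chS_eq_charFun {S : ℕ → Ω → Ed d} {n : ℕ} (hS : Measurable (S n)) :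
    chS ℙ S n = charFun (ℙ.map (S n)) := by
  ext t
  rw [chS, charFun_apply, integral_map hS.aemeasurable (by fun_prop)]
  simp only [real_inner_comm, mul_comm]

theorem memLp_id_map_two {X : Ω → Ed d} (hX : Measurable X)
    (hX2 : Integrable (fun ω => ‖X ω‖ ^ 2) ℙ) : MemLp id 2 (ℙ.map X) :=
  (memLp_map_measure_iff aestronglyMeasurable_id hX.aemeasurable).2
    ((memLp_two_iff_integrable_sq_norm hX.aestronglyMeasurable).2 hX2)

theorem contDiff_chS [IsFiniteMeasure ℙ] {S : ℕ → Ω → Ed d} {n : ℕ} (hS : Measurable (S n))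
    (hS2 : Integrable (fun ω => ‖S n ω‖ ^ 2) ℙ) : ContDiff ℝ 2 (chS ℙ S n) := by
  rw [chS_eq_charFun hS]
  exact contDiff_charFun (memLp_id_map_two hS hS2)

theorem integral_mul_eq_neg_fderiv_fderiv_chS [IsFiniteMeasure ℙ] {S : ℕ → Ω → Ed d} {n : ℕ}
    (hS : Measurable (S n)) (hS2 : Integrable (fun ω => ‖S n ω‖ ^ 2) ℙ) (j k : Fin d) :
    ∫ ω, ((S n ω j * S n ω k : ℝ) : ℂ) ∂ℙ = -fderiv ℝ (fderiv ℝ (chS ℙ S n)) 0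
      (EuclideanSpace.single j 1) (EuclideanSpace.single k 1) := by
  rw [chS_eq_charFun hS, fderiv_fderiv_charFun_zero_apply (memLp_id_map_two hS hS2), neg_neg,
    integral_map hS.aemeasurable (by fun_prop)]
  simp [EuclideanSpace.inner_single_right]

end RandomVector

theorem IsCbm.contDiffAt {d : ℕ} {m : ℝ} {O : Set (Ed d)} {U : Ed d → ℂ} {x : Ed d}
    (hU : IsCbm m O U) (hO : IsOpen O) (hx : x ∈ O) : ContDiffAt ℝ ⌊m⌋₊ U x :=
  hU.1.contDiffAt (hO.mem_nhds hx)

theorem tendsto_inv_natCast_mul_of_eventually_eq {𝕜 : Type*} [RCLike 𝕜] {a c : 𝕜}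
    {x r : ℕ → 𝕜} (hr : IsBoundedUnder (· ≤ ·) atTop (‖r ·‖))
    (hx : ∀ᶠ n in atTop, x n = a + n * c + r n) :
    Tendsto (fun n : ℕ => (n : 𝕜)⁻¹ * x n) atTop (𝓝 c) := by
  have hbdd : IsBoundedUnder (· ≤ ·) atTop (‖a + r ·‖) := by
    obtain ⟨M, hM⟩ := hr
    exact isBoundedUnder_of_eventually_le (a := ‖a‖ + M) <| (eventually_map.1 hM).mono
      fun n hn => (norm_add_le _ _).trans (by gcongr)
  have hlim := (tendsto_inv_atTop_nhds_zero_nat.zero_mul_isBoundedUnder_le hbdd).const_add c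
  rw [add_zero] at hlim
  refine hlim.congr' ?_
  filter_upwards [hx, eventually_ne_atTop 0] with n hn hn0
  have : (n : 𝕜) ≠ 0 := Nat.cast_ne_zero.2 hn0
  rw [hn]
  field_simp
  ring

theorem asymptotic_covariance_general
    {Ω : Type*} [MeasurableSpace Ω] {d : ℕ}
    (ℙ : Measure Ω) [IsProbabilityMeasure ℙ]
    (S : ℕ → Ω → Ed d) (hS : ∀ n, Measurable (S n))
    (hSint : ∀ n : ℕ, 1 ≤ n → Integrable (fun ω => ‖S n ω‖ ^ 2) ℙ)
    (R : ℝ) (hR : 0 < R) (lam L : Ed d → ℂ) (Rn : ℕ → Ed d → ℂ)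
    (hlam0 : lam 0 = 1) (hL0 : L 0 = 1)
    (hlamCb : IsCbm 2 (ball 0 R) lam) (hLCb : IsCbm 2 (ball 0 R) L)
    (heq : ∀ n : ℕ, 1 ≤ n → ∀ t ∈ ball (0 : Ed d) R,
      chS ℙ S n t = lam t ^ n * L t + Rn n t)
    (hbound : ∃ M : ℝ, ∀ n : ℕ, 1 ≤ n → ‖fderiv ℝ (fderiv ℝ (Rn n)) 0‖ ≤ M)
    (hgrad : fderiv ℝ lam 0 = 0) :
    ∀ j k : Fin d,
      Tendsto (fun n : ℕ => ((n : ℂ))⁻¹ * ∫ ω, ((S n ω j * S n ω k : ℝ) : ℂ) ∂ℙ) atTop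
        (𝓝 (-(iteratedFDeriv ℝ 2 lam 0
          ![EuclideanSpace.single j 1, EuclideanSpace.single k 1]))) := by
  intro j k
  obtain ⟨M, hM⟩ := hbound
  set u : Ed d := EuclideanSpace.single j 1
  set v : Ed d := EuclideanSpace.single k 1
  have hlam : ContDiffAt ℝ 2 lam 0 := by
    simpa using hlamCb.contDiffAt isOpen_ball (mem_ball_self hR)
  have hL : ContDiffAt ℝ 2 L 0 := by
    simpa using hLCb.contDiffAt isOpen_ball (mem_ball_self hR)
  have hRn : ∀ n, 1 ≤ n → ‖fderiv ℝ (fderiv ℝ (Rn n)) 0 u v‖ ≤ M := fun n hn =>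
    ((fderiv ℝ (fderiv ℝ (Rn n)) 0).le_opNorm₂ u v).trans (by simpa [u, v] using hM n hn)
  rw [iteratedFDeriv_two_apply]
  refine tendsto_inv_natCast_mul_of_eventually_eq
    (a := -fderiv ℝ (fderiv ℝ L) 0 u v) (r := fun n => -fderiv ℝ (fderiv ℝ (Rn n)) 0 u v) ?_ ?_
  · exact isBoundedUnder_of_eventually_le
      ((eventually_ge_atTop 1).mono fun n hn => by simpa using hRn n hn)
  · filter_upwards [eventually_ge_atTop 1] with n hn
    have hexp : ∀ᶠ t in 𝓝 (0 : Ed d), chS ℙ S n t = lam t ^ n * L t + Rn n t := by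
      filter_upwards [ball_mem_nhds 0 hR] with t ht using heq n hn t ht
    rw [integral_mul_eq_neg_fderiv_fderiv_chS (hS n) (hSint n hn),
      fderiv_fderiv_apply_of_eventuallyEq_pow_mul_add
        (contDiff_chS (hS n) (hSint n hn)).contDiffAt hlam hL hlam0 hL0 hgrad hexp]
    simp only [Matrix.cons_val_zero, Matrix.cons_val_one]
    ring

/-- **Proposition (asymptotic covariance): `−Hess λ(0) = lim_n (1/n) E[S_n S_n^*]`.** -/
theorem asymptotic_covariance
    {Ω : Type*} [MeasurableSpace Ω] {d : ℕ}
    (ℙ : Measure Ω) [IsProbabilityMeasure ℙ]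
    (S : ℕ → Ω → Ed d) (hS : ∀ n, Measurable (S n))
    (hSint : ∀ n : ℕ, 1 ≤ n → Integrable (fun ω => ‖S n ω‖ ^ 2) ℙ)
    (R : ℝ) (hR : 0 < R) (lam L : Ed d → ℂ) (Rn : ℕ → Ed d → ℂ)
    (hlam0 : lam 0 = 1) (hL0 : L 0 = 1)
    (hlamCb : IsCbm 2 (ball 0 R) lam) (hLCb : IsCbm 2 (ball 0 R) L)
    (heq : ∀ n : ℕ, 1 ≤ n → ∀ t ∈ ball (0 : Ed d) R,
      chS ℙ S n t = lam t ^ n * L t + Rn n t)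
    (hunif : TendstoUniformlyOn (fun N t => ∑ n ∈ Finset.range N, Rn (n + 1) t)
      (fun t => ∑' n : ℕ, Rn (n + 1) t) atTop (ball (0 : Ed d) R))
    (hCb : IsCbm 2 (ball 0 R) (fun t => ∑' n : ℕ, Rn (n + 1) t))
    (hdiff1 : ∀ n : ℕ, 1 ≤ n → DifferentiableAt ℝ (Rn n) 0)
    (hdiff2 : ∀ n : ℕ, 1 ≤ n → DifferentiableAt ℝ (fderiv ℝ (Rn n)) 0)
    (hbound : ∃ M : ℝ, ∀ n : ℕ, 1 ≤ n → ‖fderiv ℝ (fderiv ℝ (Rn n)) 0‖ ≤ M)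
    (hgrad : fderiv ℝ lam 0 = 0) :
    ∀ j k : Fin d,
      Tendsto (fun n : ℕ => ((n : ℂ))⁻¹ * ∫ ω, ((S n ω j * S n ω k : ℝ) : ℂ) ∂ℙ) atTop
        (𝓝 (-(iteratedFDeriv ℝ 2 lam 0
          ![EuclideanSpace.single j 1, EuclideanSpace.single k 1]))) :=
  asymptotic_covariance_general ℙ S hS hSint R hR lam L Rn hlam0 hL0 hlamCb hLCb heq hbound hgrad
end
end

section
/- Let V be a bounded open neighborhood of 0 in ℝ^d, let m ∈ ℕ*, and let w be a complex-valued function that is m-times continuously differentiable on an open set containing the closure of V. Assume there are constants c > 0 and D ≥ 0 such that for all x ∈ V: |w(x)| ≥ c‖x‖² and Σ_{j=1}^d |(∂_j w)(x)| ≤ D‖x‖. Then for every multi-index γ ∈ ℕ^d with |γ| ≤ m there is a constant C_γ ≥ 0 such that for all x ∈ V \ {0}: |∂^γ (1/w)(x)| ≤ C_γ / ‖x‖^{2+|γ|}. -/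
/-! Rescale around a point `x ≠ 0` at scale `r = ‖x‖`: the function `y ↦ w (x + r • y) / r²`
has modulus at least `c` at `y = 0`, and its derivatives of every order `i ≥ 1` at `0` are bounded
uniformly in `x` (first order by the gradient hypothesis, higher orders because `V` is bounded and
the derivatives of `w` are bounded on the compact set `closure V`). Faà di Bruno's bound then
controls the `k`-th derivative of its inverse at `0` by a constant, and undoing the rescaling
gives the factor `r ^ (-(2 + k))`. -/

open MeasureTheory Filter Metric
open scoped Topology ENNReal NNReal BigOperators

noncomputable section

open Finset
open scoped Nat

section
variable {𝕜 E F : Type*} [NontriviallyNormedField 𝕜] [NormedAddCommGroup E] [NormedSpace 𝕜 E]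
  [NormedAddCommGroup F] [NormedSpace 𝕜 F]

theorem iteratedFDeriv_smul_comp_add_smul (f : E → F) (a : E) {b r : 𝕜} (hb : b ≠ 0)
    (hr : r ≠ 0) (n : ℕ) (y : E) :
    iteratedFDeriv 𝕜 n (fun y => b • f (a + r • y)) y =
      (b * r ^ n) • iteratedFDeriv 𝕜 n f (a + r • y) := by
  have h : (fun y => b • f (a + r • y)) =
      ContinuousLinearEquiv.smulLeft (R₁ := 𝕜) (M₁ := F) (Units.mk0 b hb) ∘
        (fun z => f (a + z)) ∘ ContinuousLinearEquiv.smulLeft (R₁ := 𝕜) (Units.mk0 r hr) := rfl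
  have hright := (ContinuousLinearEquiv.smulLeft (R₁ := 𝕜) (M₁ := E)
    (Units.mk0 r hr)).iteratedFDerivWithin_comp_right (fun z => f (a + z)) uniqueDiffOn_univ
      (Set.mem_univ _) n (x := y)
  simp only [Set.preimage_univ, iteratedFDerivWithin_univ] at hright
  ext v
  rw [h, ContinuousLinearEquiv.iteratedFDeriv_comp_left, hright, iteratedFDeriv_comp_add_left]
  simp [ContinuousMultilinearMap.map_smul_univ, mul_smul, smul_comm b]

theorem ContDiffOn.exists_bound_iteratedFDeriv {f : E → F} {U K : Set E} {n : ℕ}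
    (hf : ContDiffOn 𝕜 n f U) (hU : IsOpen U) (hK : IsCompact K) (hKU : K ⊆ U) :
    ∃ M, ∀ x ∈ K, ∀ i ≤ n, ‖iteratedFDeriv 𝕜 i f x‖ ≤ M := by
  have hcont : ContinuousOn (fun x => ∑ i ∈ range (n + 1), ‖iteratedFDeriv 𝕜 i f x‖) K := by
    refine continuousOn_finsetSum _ fun i hi => ContinuousOn.norm ?_
    have := hf.continuousOn_iteratedFDerivWithin (m := i)
      (by exact_mod_cast Nat.lt_succ_iff.mp (mem_range.mp hi)) hU.uniqueDiffOn
    exact (this.congr (iteratedFDerivWithin_of_isOpen i hU).symm).mono hKU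
  obtain ⟨M, hM⟩ := hK.exists_bound_of_continuousOn hcont
  refine ⟨M, fun x hx i hi => le_trans ?_ ((Real.le_norm_self _).trans (hM x hx))⟩
  exact single_le_sum (f := fun i => ‖iteratedFDeriv 𝕜 i f x‖) (fun _ _ => norm_nonneg _)
    (mem_range.mpr (Nat.lt_succ_of_le hi))
end

theorem PiLp.opNorm_le_sum_norm_apply_single {𝕜 ι F : Type*} [NontriviallyNormedField 𝕜]
    [Fintype ι] [DecidableEq ι] {p : ℝ≥0∞} [Fact (1 ≤ p)] [SeminormedAddCommGroup F]
    [NormedSpace 𝕜 F] (L : PiLp p (fun _ : ι => 𝕜) →L[𝕜] F) :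
    ‖L‖ ≤ ∑ j, ‖L (PiLp.single p j 1)‖ := by
  refine L.opNorm_le_bound (sum_nonneg fun _ _ => norm_nonneg _) fun v => ?_
  calc ‖L v‖ = ‖∑ j, v j • L (PiLp.single p j 1)‖ := by
        conv_lhs => rw [← (PiLp.basisFun p 𝕜 ι).sum_repr v]
        simp
    _ ≤ ∑ j, ‖v‖ * ‖L (PiLp.single p j 1)‖ := by
        refine (norm_sum_le _ _).trans (sum_le_sum fun j _ => ?_)
        rw [norm_smul]
        exact mul_le_mul_of_nonneg_right (PiLp.norm_apply_le v j) (norm_nonneg _)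
    _ = (∑ j, ‖L (PiLp.single p j 1)‖) * ‖v‖ := by rw [← mul_sum, mul_comm]

section
variable {𝕜 𝕜' E : Type*} [NontriviallyNormedField 𝕜] [RCLike 𝕜']
  [NormedAlgebra 𝕜 𝕜'] [NormedAddCommGroup E] [NormedSpace 𝕜 E]

theorem norm_iteratedFDeriv_inv {z : 𝕜'} (hz : z ≠ 0) (n : ℕ) :
    ‖iteratedFDeriv 𝕜 n (Inv.inv : 𝕜' → 𝕜') z‖ = n ! / ‖z‖ ^ (n + 1) := by
  rw [← (contDiffAt_inv 𝕜' hz (n := n)).restrictScalars_iteratedFDeriv (𝕜 := 𝕜),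
    Function.comp_apply, ContinuousMultilinearMap.norm_restrictScalars,
    norm_iteratedFDeriv_eq_norm_iteratedDeriv, iteratedDeriv_eq_iterate, iter_deriv_inv]
  simp only [norm_mul, norm_pow, norm_neg, norm_one, one_pow, one_mul, RCLike.norm_natCast,
    norm_zpow]
  rw [div_eq_mul_inv, ← zpow_natCast, ← zpow_neg]
  congr 2
  push_cast
  ring

theorem norm_iteratedFDeriv_inv_le_of_scaled_bounds {f : E → 𝕜'} {s : Set E} {x : E} {n : ℕ}
    (hs : IsOpen s) (hf : ContDiffOn 𝕜 n f s) (hf0 : ∀ y ∈ s, f y ≠ 0) (hx : x ∈ s)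
    {r : 𝕜} (hr : r ≠ 0) {c B : ℝ} (hc : 0 < c) (hfx : c * ‖r‖ ^ 2 ≤ ‖f x‖)
    (hDf : ∀ i, 1 ≤ i → i ≤ n → ‖r‖ ^ i * ‖iteratedFDeriv 𝕜 i f x‖ ≤ B ^ i * ‖r‖ ^ 2) :
    ‖iteratedFDeriv 𝕜 n (fun y => (f y)⁻¹) x‖ ≤
      n ! * (∑ i ∈ range (n + 1), i ! / c ^ (i + 1)) * B ^ n / ‖r‖ ^ (n + 2) := by
  set g : E → 𝕜' := fun y => (r ^ 2)⁻¹ • f (x + r • y) with hg_def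
  set t : Set E := (fun y => x + r • y) ⁻¹' s
  have ht : IsOpen t := hs.preimage (by fun_prop)
  have h0t : (0 : E) ∈ t := by simpa [t] using hx
  have hg : ContDiffOn 𝕜 n g t :=
    (hf.comp (by fun_prop : ContDiff 𝕜 n fun y : E => x + r • y).contDiffOn
      fun _ hy => hy).const_smul _
  have hgt : Set.MapsTo g t {0}ᶜ := fun y hy =>
    smul_ne_zero (inv_ne_zero (pow_ne_zero _ hr)) (hf0 _ hy)
  have hr2 : 0 < ‖r‖ ^ 2 := by positivity
  have hg0 : c ≤ ‖g 0‖ := by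
    rw [hg_def]
    simp only [smul_zero, add_zero, norm_smul, norm_inv, norm_pow]
    rw [inv_mul_eq_div, le_div_iff₀ hr2]
    exact hfx
  have hcomp := norm_iteratedFDerivWithin_comp_le (contDiffOn_inv 𝕜) hg le_rfl
    isOpen_compl_singleton.uniqueDiffOn ht.uniqueDiffOn hgt h0t
    (C := ∑ i ∈ range (n + 1), i ! / c ^ (i + 1)) (D := B) ?_ ?_
  · have hinv : Inv.inv ∘ g = fun y => r ^ 2 • (f (x + r • y))⁻¹ := by
      funext y
      simp [g, Algebra.smul_def, mul_comm]
    rw [iteratedFDerivWithin_of_isOpen n ht h0t, hinv,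
      iteratedFDeriv_smul_comp_add_smul (fun y => (f y)⁻¹) x (pow_ne_zero 2 hr) hr, norm_smul]
      at hcomp
    simp only [smul_zero, add_zero, norm_mul, norm_pow] at hcomp
    rw [le_div_iff₀ (by positivity)]
    exact le_of_eq_of_le (by ring) hcomp
  · intro i hi
    rw [iteratedFDerivWithin_of_isOpen i isOpen_compl_singleton (hgt h0t),
      norm_iteratedFDeriv_inv (hgt h0t)]
    calc (i ! : ℝ) / ‖g 0‖ ^ (i + 1) ≤ i ! / c ^ (i + 1) := by gcongr
      _ ≤ ∑ i ∈ range (n + 1), (i ! : ℝ) / c ^ (i + 1) :=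
        single_le_sum (f := fun i => (i ! : ℝ) / c ^ (i + 1)) (fun _ _ => by positivity)
          (mem_range.mpr (Nat.lt_succ_of_le hi))
  · intro i hi1 hin
    rw [iteratedFDerivWithin_of_isOpen i ht h0t, hg_def,
      iteratedFDeriv_smul_comp_add_smul f x (inv_ne_zero (pow_ne_zero 2 hr)) hr, norm_smul]
    simp only [smul_zero, add_zero, norm_mul, norm_inv, norm_pow]
    rw [mul_assoc, inv_mul_le_iff₀ hr2, mul_comm (‖r‖ ^ 2)]
    exact hDf i hi1 hin
end

theorem norm_iteratedFDeriv_inv_le_of_quadratic_lower_bound {E 𝕜' : Type*} [NormedAddCommGroup E]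
    [NormedSpace ℝ E] [RCLike 𝕜'] {f : E → 𝕜'} {s : Set E} {x : E} {n : ℕ} (hs : IsOpen s)
    (hf : ContDiffOn ℝ n f s) (hf0 : ∀ y ∈ s, f y ≠ 0) (hx : x ∈ s) (hx0 : x ≠ 0)
    {c A M R : ℝ} (hc : 0 < c) (hfx : c * ‖x‖ ^ 2 ≤ ‖f x‖) (hf' : ‖fderiv ℝ f x‖ ≤ A * ‖x‖)
    (hM : ∀ i ≤ n, ‖iteratedFDeriv ℝ i f x‖ ≤ M) (hR : ‖x‖ ≤ R) :
    ‖iteratedFDeriv ℝ n (fun y => (f y)⁻¹) x‖ ≤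
      n ! * (∑ i ∈ range (n + 1), i ! / c ^ (i + 1)) * max (max 1 A) (max M R) ^ n /
        ‖x‖ ^ (n + 2) := by
  set B := max (max 1 A) (max M R)
  have hB1 : 1 ≤ B := le_max_of_le_left (le_max_left _ _)
  have hxB : ‖x‖ ≤ B := hR.trans (le_max_of_le_right (le_max_right _ _))
  have key := norm_iteratedFDeriv_inv_le_of_scaled_bounds (r := ‖x‖) (B := B) hs hf hf0 hx
    (norm_ne_zero_iff.2 hx0) hc
  simp only [norm_norm] at key
  refine key hfx fun i hi1 hin => ?_
  obtain rfl | hi2 := hi1.eq_or_lt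
  · rw [norm_iteratedFDeriv_one]
    have hAB : A ≤ B := le_max_of_le_left (le_max_right _ _)
    calc ‖x‖ ^ 1 * ‖fderiv ℝ f x‖ ≤ ‖x‖ * (A * ‖x‖) := by rw [pow_one]; gcongr
      _ ≤ B ^ 1 * ‖x‖ ^ 2 := by nlinarith [sq_nonneg ‖x‖]
  · obtain ⟨j, rfl⟩ : ∃ j, i = j + 2 := ⟨i - 2, by omega⟩
    have hMB : M ≤ B * B :=
      (le_max_of_le_right (le_max_left _ _)).trans (le_mul_of_one_le_left (by linarith) hB1)
    calc ‖x‖ ^ (j + 2) * ‖iteratedFDeriv ℝ (j + 2) f x‖ ≤ (B ^ j * ‖x‖ ^ 2) * (B * B) := by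
          rw [pow_add]
          gcongr
          exact (hM _ hin).trans hMB
      _ = B ^ (j + 2) * ‖x‖ ^ 2 := by ring

theorem inv_w_derivative_bounds_general
    {d : ℕ} (m : ℕ)
    (V : Set (Ed d)) (hVopen : IsOpen V) (hVbdd : Bornology.IsBounded V)
    (U : Set (Ed d)) (hUopen : IsOpen U) (hVU : closure V ⊆ U)
    (w : Ed d → ℂ) (hw : ContDiffOn ℝ (m : ℕ∞) w U)
    (c : ℝ) (hc : 0 < c) (D : ℝ)
    (hlow : ∀ x ∈ V, c * ‖x‖ ^ 2 ≤ ‖w x‖)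
    (hgrad : ∀ x ∈ V,
      ∑ j : Fin d, ‖fderiv ℝ w x (EuclideanSpace.single j 1)‖ ≤ D * ‖x‖) :
    ∀ k : ℕ, k ≤ m → ∀ ι : Fin k → Fin d, ∃ C : ℝ, 0 ≤ C ∧
      ∀ x ∈ V, x ≠ 0 →
        ‖iteratedFDeriv ℝ k (fun y => (w y)⁻¹) x
          (fun i => EuclideanSpace.single (ι i) 1)‖ ≤ C / ‖x‖ ^ (2 + k) := by
  intro k hk ι
  have hwk : ContDiffOn ℝ k w U := hw.of_le (by exact_mod_cast hk)
  obtain ⟨R, hR⟩ := isBounded_iff_forall_norm_le.1 hVbdd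
  obtain ⟨M, hM⟩ := hwk.exists_bound_iteratedFDeriv hUopen hVbdd.isCompact_closure hVU
  have hw0 : ∀ y ∈ V \ {0}, w y ≠ 0 := fun y hy =>
    norm_pos_iff.1 ((mul_pos hc (pow_pos (norm_pos_iff.2 hy.2) 2)).trans_le (hlow y hy.1))
  refine ⟨k ! * (∑ i ∈ range (k + 1), i ! / c ^ (i + 1)) * max (max 1 D) (max M R) ^ k,
    by positivity, fun x hxV hx0 => ?_⟩
  calc _ ≤ ‖iteratedFDeriv ℝ k (fun y => (w y)⁻¹) x‖ :=
        (ContinuousMultilinearMap.le_opNorm _ _).trans (by simp)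
    _ ≤ _ := norm_iteratedFDeriv_inv_le_of_quadratic_lower_bound (hVopen.sdiff isClosed_singleton)
        (hwk.mono (Set.sdiff_subset.trans (subset_closure.trans hVU))) hw0 ⟨hxV, hx0⟩ hx0 hc
        (hlow x hxV) ((PiLp.opNorm_le_sum_norm_apply_single _).trans (hgrad x hxV))
        (hM x (subset_closure hxV)) (hR x hxV)
    _ = _ := by rw [Nat.add_comm k 2]

/-- **Proposition A.0: bounds for the partial derivatives of `1/w`.** -/
theorem inv_w_derivative_bounds
    {d : ℕ} (m : ℕ) (hm : 1 ≤ m)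
    (V : Set (Ed d)) (hVopen : IsOpen V) (hVbdd : Bornology.IsBounded V) (hV0 : (0 : Ed d) ∈ V)
    (U : Set (Ed d)) (hUopen : IsOpen U) (hVU : closure V ⊆ U)
    (w : Ed d → ℂ) (hw : ContDiffOn ℝ (m : ℕ∞) w U)
    (c : ℝ) (hc : 0 < c) (D : ℝ) (hD : 0 ≤ D)
    (hlow : ∀ x ∈ V, c * ‖x‖ ^ 2 ≤ ‖w x‖)
    (hgrad : ∀ x ∈ V,
      ∑ j : Fin d, ‖fderiv ℝ w x (EuclideanSpace.single j 1)‖ ≤ D * ‖x‖) :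
    ∀ k : ℕ, k ≤ m → ∀ ι : Fin k → Fin d, ∃ C : ℝ, 0 ≤ C ∧
      ∀ x ∈ V, x ≠ 0 →
        ‖iteratedFDeriv ℝ k (fun y => (w y)⁻¹) x
          (fun i => EuclideanSpace.single (ι i) 1)‖ ≤ C / ‖x‖ ^ (2 + k) :=
  inv_w_derivative_bounds_general m V hVopen hVbdd U hUopen hVU w hw c hc D hlow hgrad
end
end
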